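/- arXiv:1602.06610 — 2 statements merged into one kernel-verified Lean document; each statement's English description precedes it below -/
import Mathlib

section
/- Finite mixtures of univariate normal densities are linearly independent: if ∑_{j=1}^k c_j φ(y|μ_j, σ_j²) = 0 for all y ∈ ℝ, where the pairs (μ_j, σ_j²) are distinct and σ_j² > 0, then c_j = 0 for all j. -/
open Finset Real

noncomputable def normalPDF (μ v y : ℝ) : ℝ :=
  (Real.sqrt (2 * Real.pi * v))⁻¹ * Real.exp (-(y - μ) ^ 2 / (2 * v))

/-!
Order the pairs `(σ², μ)` lexicographically. At `+∞` each normal density is little-o of every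
density with a larger pair: the logarithm of their ratio is a quadratic in `y` whose leading
coefficient `1/(2σ₁²) - 1/(2σ₂²)` is positive, or, for equal variances, a linear function with
positive slope. In a vanishing combination the summand with the largest pair among the nonzero
coefficients would be little-o of itself, which is impossible.
-/

open Asymptotics Filter Function

theorem linearIndependent_of_isLittleO {ι α β 𝕜 E : Type*} [LinearOrder β] [NormedField 𝕜]
    [NormedAddCommGroup E] [NormedSpace 𝕜 E] {l : Filter α} {f : ι → α → E} (key : ι → β)
    (hkey : Injective key) (hf : ∀ i j, key i < key j → f i =o[l] f j)
    (hne : ∀ i, ∃ᶠ x in l, f i x ≠ 0) : LinearIndependent 𝕜 f := by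
  classical
  rw [linearIndependent_iff']
  intro s g hsum
  by_contra! ⟨i₀, hi₀s, hi₀⟩
  obtain ⟨j, hj, hjmax⟩ :=
    (s.filter (g · ≠ 0)).exists_max_image key ⟨i₀, mem_filter.2 ⟨hi₀s, hi₀⟩⟩
  rw [mem_filter] at hj
  have hsmall : ∀ i ∈ s.erase j, (g i • f i) =o[l] f j := by
    intro i hi
    obtain ⟨hij, his⟩ := mem_erase.1 hi
    by_cases hgi : g i = 0
    · rw [hgi, zero_smul]
      exact isLittleO_zero (f j) l
    · exact (hf i j ((hjmax i (mem_filter.2 ⟨his, hgi⟩)).lt_of_ne (hkey.ne hij))).const_smul_left _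
  have hself : (g j • f j) =o[l] f j := by
    have : g j • f j = -∑ i ∈ s.erase j, g i • f i := by
      rw [eq_neg_iff_add_eq_zero, add_sum_erase s (fun i => g i • f i) hj.1, hsum]
    rw [this]
    exact (IsLittleO.sum hsmall).neg_left
  exact isLittleO_irrefl (hne j) ((isLittleO_const_smul_left hj.2).1 hself)

theorem tendsto_quadratic_atTop {𝕜 : Type*} [Field 𝕜] [LinearOrder 𝕜] [IsStrictOrderedRing 𝕜]
    {a b d : 𝕜} (h : 0 < a ∨ a = 0 ∧ 0 < b) :
    Tendsto (fun y => a * y ^ 2 + b * y + d) atTop atTop := by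
  rcases h with ha | ⟨rfl, hb⟩
  · have hlin : Tendsto (fun y => a * y + b) atTop atTop :=
      tendsto_atTop_add_const_right _ b (tendsto_id.const_mul_atTop ha)
    have := tendsto_atTop_add_const_right _ d (hlin.atTop_mul_atTop₀ tendsto_id)
    simpa only [sq, ← mul_assoc, ← add_mul, id] using this
  · simpa using tendsto_atTop_add_const_right _ d (tendsto_id.const_mul_atTop hb)

theorem normalPDF_isLittleO {μ₁ v₁ μ₂ v₂ : ℝ} (hv₁ : 0 < v₁) (hv₂ : 0 < v₂)
    (h : toLex (v₁, μ₁) < toLex (v₂, μ₂)) :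
    normalPDF μ₁ v₁ =o[atTop] normalPDF μ₂ v₂ := by
  have hc : (√(2 * π * v₂))⁻¹ ≠ 0 := by positivity
  unfold normalPDF
  refine IsLittleO.const_mul_left ?_ _
  rw [isLittleO_const_mul_right_iff hc, Real.isLittleO_exp_comp_exp_comp]
  have hab : 0 < 1 / (2 * v₁) - 1 / (2 * v₂) ∨
      1 / (2 * v₁) - 1 / (2 * v₂) = 0 ∧ 0 < μ₂ / v₂ - μ₁ / v₁ := by
    rcases Prod.Lex.toLex_lt_toLex.1 h with hv | ⟨hv, hμ⟩
    · left
      have : 1 / (2 * v₂) < 1 / (2 * v₁) := one_div_lt_one_div_of_lt (by positivity) (by linarith)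
      linarith
    · subst hv
      right
      exact ⟨sub_self _, sub_pos.2 (div_lt_div_of_pos_right hμ hv₁)⟩
  convert tendsto_quadratic_atTop (d := μ₁ ^ 2 / (2 * v₁) - μ₂ ^ 2 / (2 * v₂)) hab using 2 with y
  field_simp
  ring

theorem normalPDF_pos (μ : ℝ) {v : ℝ} (hv : 0 < v) (y : ℝ) : 0 < normalPDF μ v y := by
  unfold normalPDF
  positivity

/-- Finite families of univariate normal densities with distinct (mean, variance) pairs
are linearly independent: if `∑ j, c j * φ(y | μ j, v j) = 0` for all `y`, then all
coefficients vanish. -/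
theorem normal_densities_linear_independent (k : ℕ) (c μ v : Fin k → ℝ)
    (hv : ∀ j, 0 < v j)
    (hdist : ∀ i j : Fin k, i ≠ j → (μ i, v i) ≠ (μ j, v j))
    (hzero : ∀ y : ℝ, ∑ j, c j * normalPDF (μ j) (v j) y = 0) :
    ∀ j, c j = 0 := by
  have hkey : Injective fun j => toLex (v j, μ j) := fun i j hij => by
    by_contra hne
    simp only [toLex_inj, Prod.mk.injEq] at hij
    exact hdist i j hne (by rw [hij.1, hij.2])
  have hind : LinearIndependent ℝ fun j y => normalPDF (μ j) (v j) y :=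
    linearIndependent_of_isLittleO (l := atTop) _ hkey
      (fun i j hij => normalPDF_isLittleO (hv i) (hv j) hij)
      (fun j => Frequently.of_forall fun y => (normalPDF_pos _ (hv j) y).ne')
  exact Fintype.linearIndependent_iff.1 hind c (funext fun y => by simpa using hzero y)
end

section
/- If a function g : ℝ^p → ℝ satisfies g(x) = F(αᵀx) = G(βᵀx) for all x ∈ ℝ^p, where α, β are unit vectors and F, G : ℝ → ℝ are differentiable with F' not identically zero, then β = ±α and G(t) = F(±t) accordingly. -/
/-!
Restricting the identity `F ⟪α, x⟫ = G ⟪β, x⟫` to the lines `ℝ α` and `ℝ β` gives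
`F t = G (c t)` and `G t = F (c t)` with `c = ⟪α, β⟫`, hence `F t = F (c² t)`. If `|c| < 1`,
iterating and letting `c²ⁿ t → 0` makes the continuous `F` constant, contradicting `F' ≢ 0`.
So `c = ±1`, and the equality case of Cauchy–Schwarz gives `β = ±α`.
-/

open Filter Topology

theorem apply_eq_apply_inner_mul_of_comp_inner_eq {E X : Type*} [NormedAddCommGroup E]
    [InnerProductSpace ℝ E] {α β : E} (hα : ‖α‖ = 1) {F G : ℝ → X}
    (h : ∀ x, F (inner ℝ α x) = G (inner ℝ β x)) (t : ℝ) :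
    F t = G (inner ℝ α β * t) := by
  simpa [real_inner_smul_right, real_inner_self_eq_norm_sq, hα, real_inner_comm α β, mul_comm]
    using h (t • α)

theorem apply_eq_apply_zero_of_apply_mul_eq {X : Type*} [TopologicalSpace X] [T2Space X]
    {f : ℝ → X} (hf : ContinuousAt f 0) {a : ℝ} (ha : |a| < 1) (h : ∀ t, f (a * t) = f t)
    (t : ℝ) : f t = f 0 := by
  have hpow : ∀ n : ℕ, f (a ^ n * t) = f t := by
    intro n
    induction n with
    | zero => simp
    | succ n ih => rw [pow_succ', mul_assoc, h, ih]
  have hlim : Tendsto (fun n : ℕ => f (a ^ n * t)) atTop (𝓝 (f 0)) := by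
    refine hf.tendsto.comp ?_
    simpa using (tendsto_pow_atTop_nhds_zero_of_abs_lt_one ha).mul_const t
  simp only [hpow] at hlim
  exact tendsto_nhds_unique tendsto_const_nhds hlim

theorem single_index_link_identifiable_general (p : ℕ)
    (α β : EuclideanSpace ℝ (Fin p)) (hα : ‖α‖ = 1) (hβ : ‖β‖ = 1)
    (F G : ℝ → ℝ) (hF : Differentiable ℝ F)
    (hF' : ∃ t : ℝ, deriv F t ≠ 0)
    (hagree : ∀ x : EuclideanSpace ℝ (Fin p), F (inner ℝ α x) = G (inner ℝ β x)) :
    (β = α ∧ ∀ t : ℝ, G t = F t) ∨ (β = -α ∧ ∀ t : ℝ, G t = F (-t)) := by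
  set c : ℝ := inner ℝ α β
  have hFG := apply_eq_apply_inner_mul_of_comp_inner_eq hα hagree
  have hGF : ∀ t, G t = F (c * t) := by
    simpa [real_inner_comm] using
      apply_eq_apply_inner_mul_of_comp_inner_eq hβ fun x => (hagree x).symm
  have hc_le : |c| ≤ 1 := by simpa [hα, hβ] using abs_real_inner_le_norm α β
  have hc_abs : |c| = 1 := by
    refine hc_le.eq_or_lt.resolve_right fun hlt => ?_
    have hconst : F = fun _ => F 0 := funext <|
      apply_eq_apply_zero_of_apply_mul_eq hF.continuous.continuousAt
        (a := c * c) (by rw [abs_mul]; nlinarith [abs_nonneg c])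
        fun t => by rw [mul_assoc, ← hGF, ← hFG]
    obtain ⟨t, ht⟩ := hF'
    exact ht (by rw [hconst, deriv_const])
  rcases abs_eq zero_le_one |>.mp hc_abs with hc1 | hc1
  · exact .inl ⟨((inner_eq_one_iff_of_norm_eq_one hα hβ).mp hc1).symm,
      fun t => by rw [hGF, hc1, one_mul]⟩
  · refine .inr ⟨?_, fun t => by rw [hGF, hc1, neg_one_mul]⟩
    rw [(inner_eq_neg_one_iff_of_norm_eq_one hα hβ).mp hc1, neg_neg]

/-- Basic identifiability of the index in a single-index model: if
`g(x) = F(⟪α, x⟫) = G(⟪β, x⟫)` for all `x ∈ ℝ^p`, with `α, β` unit vectors and `F, G`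
differentiable, `F'` not identically zero, then `β = α` and `G = F`, or `β = -α` and
`G(t) = F(-t)`. -/
theorem single_index_link_identifiable (p : ℕ) (hp : 1 ≤ p)
    (α β : EuclideanSpace ℝ (Fin p)) (hα : ‖α‖ = 1) (hβ : ‖β‖ = 1)
    (F G : ℝ → ℝ) (hF : Differentiable ℝ F) (hG : Differentiable ℝ G)
    (hF' : ∃ t : ℝ, deriv F t ≠ 0)
    (hagree : ∀ x : EuclideanSpace ℝ (Fin p), F (inner ℝ α x) = G (inner ℝ β x)) :
    (β = α ∧ ∀ t : ℝ, G t = F t) ∨ (β = -α ∧ ∀ t : ℝ, G t = F (-t)) :=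
  single_index_link_identifiable_general p α β hα hβ F G hF hF' hagree
end
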